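/- For every n ≥ 0 and every set E ⊂ ℝ^d, one has ν̃_n^s(E) ≤ ν_n^s(E) ≤ (2+√d)^s · ν̃_n^s(E), where ν̃_n^s uses covers by balls with centers in S_n and radii ≥ 1, and ν_n^s uses covers by balls centered at integer points of S_n with positive integer radii. -/

import Mathlib

open Metric Set ENNReal MeasureTheory

noncomputable def shell (X : Type*) [NormedAddCommGroup X] (n : ℕ) : Set X :=
  if n = 0 then Metric.ball 0 1 else Metric.ball 0 ((2:ℝ)^n) \ Metric.ball 0 ((2:ℝ)^(n-1))

noncomputable def nuT {X : Type*} [NormedAddCommGroup X] (s : ℝ) (n : ℕ) (E : Set X) : ℝ≥0∞ :=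
  sInf { t : ℝ≥0∞ | ∃ (m : ℕ) (x : Fin m → X) (r : Fin m → ℝ),
    (∀ i, x i ∈ shell X n) ∧ (∀ i, 1 ≤ r i) ∧
    (E ∩ shell X n ⊆ ⋃ i, Metric.ball (x i) (r i)) ∧
    t = ∑ i, ENNReal.ofReal ((r i / 2^n)^s) }

noncomputable def macroDim {X : Type*} [NormedAddCommGroup X] (E : Set X) : ℝ :=
  sInf { s : ℝ | 0 ≤ s ∧ ∑' n, nuT s n E < ⊤ }

def IsIntegerPoint {d : ℕ} (x : EuclideanSpace ℝ (Fin d)) : Prop := ∀ j, ∃ z : ℤ, x j = (z : ℝ)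

def IsProperCover {d : ℕ} (n : ℕ) (E : Set (EuclideanSpace ℝ (Fin d))) {m : ℕ}
    (x : Fin m → EuclideanSpace ℝ (Fin d)) (r : Fin m → ℕ) : Prop :=
  (∀ i, x i ∈ shell (EuclideanSpace ℝ (Fin d)) n) ∧ (∀ i, IsIntegerPoint (x i)) ∧
  (∀ i, 1 ≤ r i) ∧ (E ∩ shell (EuclideanSpace ℝ (Fin d)) n ⊆ ⋃ i, Metric.ball (x i) ((r i : ℝ)))

noncomputable def nuP {d : ℕ} (s : ℝ) (n : ℕ) (E : Set (EuclideanSpace ℝ (Fin d))) : ℝ≥0∞ :=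
  sInf { t : ℝ≥0∞ | ∃ (m : ℕ) (x : Fin m → EuclideanSpace ℝ (Fin d)) (r : Fin m → ℕ),
    IsProperCover n E x r ∧ t = ∑ i, ENNReal.ofReal (((r i : ℝ) / 2^n)^s) }

/-!
The first inequality holds because every cover admissible for `nuP` is admissible for `nuT`.
For the second, every point `x` of the shell lies within `√d` of an integer point of the same
shell: rounding the coordinates of `x` one at a time, from towards zero to away from zero, moves
the norm from below `‖x‖` to above it in steps of at most `1`, while each shell is a norm range
`[a, 2 ^ n)` of width at least `1`. Replacing each ball `B(x, r)` of a cover by `B(y, ⌈r + √d⌉)`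
multiplies its weight by at most `(2 + √d) ^ s`, since `r ≥ 1`.
-/

lemma exists_mem_Ico_of_le_add_one {f : ℕ → ℝ} {a b : ℝ} {N : ℕ} (hab : a + 1 ≤ b)
    (hf : ∀ k < N, f (k + 1) ≤ f k + 1) (h0 : f 0 < b) (hN : a ≤ f N) :
    ∃ k, f k ∈ Ico a b := by
  induction N with
  | zero => exact ⟨0, hN, h0⟩
  | succ N ih =>
    by_cases hNa : a ≤ f N
    · exact ih (fun k hk => hf k (by omega)) hNa
    · exact ⟨N + 1, hN, by linarith [hf N N.lt_succ_self]⟩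

lemma exists_int_abs_le_abs_le (t : ℝ) : ∃ p q : ℤ, |(p : ℝ)| ≤ |t| ∧ |t| ≤ |(q : ℝ)| ∧
    |(p : ℝ) - t| ≤ 1 ∧ |(q : ℝ) - t| ≤ 1 ∧ |(q : ℝ) - p| ≤ 1 := by
  wlog ht : 0 ≤ t generalizing t
  · obtain ⟨p, q, h⟩ := this (-t) (by linarith)
    refine ⟨-p, -q, ?_⟩
    have hneg (u v : ℝ) : |-u - v| = |u - -v| := by rw [← abs_neg]; congr 1; ring
    simpa only [Int.cast_neg, abs_neg, hneg, neg_sub_neg, abs_sub_comm (p : ℝ)] using h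
  have h0 : (0 : ℝ) ≤ ⌊t⌋ := mod_cast Int.floor_nonneg.2 ht
  have hceil : (⌈t⌉ : ℝ) ≤ ⌊t⌋ + 1 := mod_cast Int.ceil_le_floor_add_one t
  refine ⟨⌊t⌋, ⌈t⌉, ?_⟩
  rw [abs_of_nonneg h0, abs_of_nonneg ht, abs_of_nonneg (ht.trans (Int.le_ceil t))]
  refine ⟨Int.floor_le t, Int.le_ceil t, ?_, ?_, ?_⟩ <;> rw [abs_le] <;> constructor <;>
    linarith [Int.floor_le t, Int.le_ceil t, Int.lt_floor_add_one t, Int.ceil_lt_add_one t]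

namespace EuclideanSpace

variable {𝕜 ι : Type*} [RCLike 𝕜] [Fintype ι]

lemma norm_le_norm_of_norm_apply_le {u w : EuclideanSpace 𝕜 ι} (h : ∀ i, ‖u i‖ ≤ ‖w i‖) :
    ‖u‖ ≤ ‖w‖ := by
  rw [norm_eq, norm_eq]
  gcongr with i
  exact h i

lemma dist_le_sqrt_card_of_dist_apply_le_one {u w : EuclideanSpace 𝕜 ι}
    (h : ∀ i, dist (u i) (w i) ≤ 1) : dist u w ≤ √(Fintype.card ι) := by
  rw [dist_eq]
  gcongr
  calc ∑ i, dist (u i) (w i) ^ 2 ≤ ∑ _i : ι, (1 : ℝ) :=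
        Finset.sum_le_sum fun i _ => pow_le_one₀ dist_nonneg (h i)
    _ = Fintype.card ι := by simp

lemma dist_eq_dist_apply_of_forall_ne {u w : EuclideanSpace 𝕜 ι} (i : ι)
    (h : ∀ j ≠ i, u j = w j) : dist u w = dist (u i) (w i) := by
  rw [dist_eq, Finset.sum_eq_single i (fun j _ hj => by simp [h j hj]) (by simp),
    Real.sqrt_sq dist_nonneg]

end EuclideanSpace

lemma exists_isIntegerPoint_norm_mem_Ico_dist_le {d : ℕ} {a b : ℝ} (hab : a + 1 ≤ b)
    {x : EuclideanSpace ℝ (Fin d)} (hx : ‖x‖ ∈ Ico a b) :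
    ∃ y, IsIntegerPoint y ∧ ‖y‖ ∈ Ico a b ∧ dist x y ≤ √d := by
  choose p q hp hq hpx hqx hqp using fun j => exists_int_abs_le_abs_le (x j)
  let v : ℕ → EuclideanSpace ℝ (Fin d) := fun k =>
    WithLp.toLp 2 fun j => if (j : ℕ) < k then (q j : ℝ) else p j
  have hv (k : ℕ) (j : Fin d) : v k j = if (j : ℕ) < k then (q j : ℝ) else p j := rfl
  have hstep (k : ℕ) (hk : k < d) : ‖v (k + 1)‖ ≤ ‖v k‖ + 1 := by
    have hdist : dist (v (k + 1)) (v k) ≤ 1 := by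
      rw [EuclideanSpace.dist_eq_dist_apply_of_forall_ne ⟨k, hk⟩ fun j hj => ?_]
      · simpa [hv, Real.dist_eq] using hqp ⟨k, hk⟩
      · have : (j : ℕ) ≠ k := fun h => hj (Fin.ext h)
        simp only [hv]
        congr 1
        exact propext (by omega)
    linarith [norm_sub_norm_le (v (k + 1)) (v k), dist_eq_norm (v (k + 1)) (v k)]
  have h0 : ‖v 0‖ < b :=
    (EuclideanSpace.norm_le_norm_of_norm_apply_le fun j => by simpa [hv] using hp j).trans_lt hx.2
  have hd : a ≤ ‖v d‖ :=
    hx.1.trans (EuclideanSpace.norm_le_norm_of_norm_apply_le fun j => by simpa [hv] using hq j)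
  obtain ⟨k, hk⟩ := exists_mem_Ico_of_le_add_one (f := fun k => ‖v k‖) hab hstep h0 hd
  refine ⟨v k, fun j => ?_, hk, ?_⟩
  · rw [hv]
    split_ifs
    exacts [⟨_, rfl⟩, ⟨_, rfl⟩]
  · refine (EuclideanSpace.dist_le_sqrt_card_of_dist_apply_le_one (u := x) (w := v k)
      fun j => ?_).trans_eq (by simp)
    rw [hv, Real.dist_eq, abs_sub_comm]
    split_ifs
    exacts [hqx j, hpx j]

lemma exists_shell_eq_norm_mem_Ico (X : Type*) [NormedAddCommGroup X] (n : ℕ) :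
    ∃ a : ℝ, a + 1 ≤ 2 ^ n ∧ shell X n = {x | ‖x‖ ∈ Ico a (2 ^ n)} := by
  cases n with
  | zero => exact ⟨0, by norm_num, by ext x; simp [shell]⟩
  | succ k =>
    refine ⟨2 ^ k, by rw [pow_succ]; linarith [one_le_pow₀ (n := k) (one_le_two (α := ℝ))], ?_⟩
    ext x
    simp [shell, and_comm]

lemma exists_isIntegerPoint_mem_shell_dist_le {d n : ℕ} {x : EuclideanSpace ℝ (Fin d)}
    (hx : x ∈ shell _ n) : ∃ y ∈ shell _ n, IsIntegerPoint y ∧ dist x y ≤ √d := by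
  obtain ⟨a, ha, hshell⟩ := exists_shell_eq_norm_mem_Ico (EuclideanSpace ℝ (Fin d)) n
  rw [hshell] at hx ⊢
  obtain ⟨y, hy, hya, hxy⟩ := exists_isIntegerPoint_norm_mem_Ico_dist_le ha hx
  exact ⟨y, hya, hy, hxy⟩

lemma nuT_le_nuP {d : ℕ} (s : ℝ) (n : ℕ) (E : Set (EuclideanSpace ℝ (Fin d))) :
    nuT s n E ≤ nuP s n E := by
  refine sInf_le_sInf ?_
  rintro t ⟨m, x, r, ⟨hx, -, hr, hE⟩, rfl⟩
  exact ⟨m, x, fun i => r i, hx, fun i => Nat.one_le_cast.2 (hr i), hE, rfl⟩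

lemma nuP_le_sum_of_isProperCover {d : ℕ} (s : ℝ) {n m : ℕ}
    {E : Set (EuclideanSpace ℝ (Fin d))} {x : Fin m → EuclideanSpace ℝ (Fin d)} {r : Fin m → ℕ}
    (h : IsProperCover n E x r) :
    nuP s n E ≤ ∑ i, ENNReal.ofReal (((r i : ℝ) / 2 ^ n) ^ s) :=
  sInf_le ⟨m, x, r, h, rfl⟩

lemma natCeil_add_le_mul {r c : ℝ} (hr : 1 ≤ r) (hc : 0 ≤ c) :
    (⌈r + c⌉₊ : ℝ) ≤ (2 + c) * r := by
  nlinarith [Nat.ceil_lt_add_one (by linarith : 0 ≤ r + c)]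

lemma nuP_le_mul_sum {d : ℕ} {s : ℝ} (hs : 0 ≤ s) {n m : ℕ}
    {E : Set (EuclideanSpace ℝ (Fin d))} {x : Fin m → EuclideanSpace ℝ (Fin d)} {r : Fin m → ℝ}
    (hx : ∀ i, x i ∈ shell _ n) (hr : ∀ i, 1 ≤ r i) (hE : E ∩ shell _ n ⊆ ⋃ i, ball (x i) (r i)) :
    nuP s n E ≤ ENNReal.ofReal ((2 + √d) ^ s) * ∑ i, ENNReal.ofReal ((r i / 2 ^ n) ^ s) := by
  choose y hy hyZ hxy using fun i => exists_isIntegerPoint_mem_shell_dist_le (hx i)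
  have hcover : IsProperCover n E y fun i => ⌈r i + √d⌉₊ := by
    refine ⟨hy, hyZ, fun i => Nat.one_le_ceil_iff.2 (by linarith [hr i, Real.sqrt_nonneg d]), ?_⟩
    refine hE.trans (iUnion_mono fun i => ball_subset_ball' ?_)
    linarith [Nat.le_ceil (r i + √d), hxy i]
  rw [Finset.mul_sum]
  refine (nuP_le_sum_of_isProperCover s hcover).trans (Finset.sum_le_sum fun i _ => ?_)
  have hr0 : 0 ≤ r i := zero_le_one.trans (hr i)
  rw [← ENNReal.ofReal_mul (by positivity), ← Real.mul_rpow (by positivity) (by positivity),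
    ← mul_div_assoc]
  gcongr
  exact natCeil_add_le_mul (hr i) (Real.sqrt_nonneg d)

lemma nuP_le_mul_nuT {d : ℕ} {s : ℝ} (hs : 0 ≤ s) (n : ℕ) (E : Set (EuclideanSpace ℝ (Fin d))) :
    nuP s n E ≤ ENNReal.ofReal ((2 + √d) ^ s) * nuT s n E := by
  have hc : ENNReal.ofReal ((2 + √d) ^ s) ≠ 0 := by positivity
  rw [← ENNReal.div_le_iff' hc ENNReal.ofReal_ne_top]
  refine le_sInf ?_
  rintro t ⟨m, x, r, hx, hr, hE, rfl⟩
  exact ENNReal.div_le_of_le_mul' (nuP_le_mul_sum hs hx hr hE)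

theorem stmt4 (d : ℕ) (s : ℝ) (hs : 0 ≤ s) (n : ℕ) (E : Set (EuclideanSpace ℝ (Fin d))) :
    nuT s n E ≤ nuP s n E ∧
      nuP s n E ≤ ENNReal.ofReal ((2 + Real.sqrt d) ^ s) * nuT s n E :=
  ⟨nuT_le_nuP s n E, nuP_le_mul_nuT hs n E⟩
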